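/- arXiv:2512.06967 — 4 statements merged into one kernel-verified Lean document; each statement's English description precedes it below -/
import Mathlib

section
/- If T is a quasinormal bounded operator on a Hilbert space, then the closure of the range of I - T*T is a reducing subspace for T (that is, it is invariant under both T and T*). -/
open ContinuousLinearMap

theorem stmt_4 {H : Type*} [NormedAddCommGroup H] [InnerProductSpace ℂ H]
    [CompleteSpace H] (T : H →L[ℂ] H)
    (hq : T ∘L (ContinuousLinearMap.adjoint T ∘L T) = (ContinuousLinearMap.adjoint T ∘L T) ∘L T) :
    ∀ x ∈ (LinearMap.range ((1 - ContinuousLinearMap.adjoint T ∘L T : H →L[ℂ] H) :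
        H →ₗ[ℂ] H)).topologicalClosure,
      T x ∈ (LinearMap.range ((1 - ContinuousLinearMap.adjoint T ∘L T : H →L[ℂ] H) :
        H →ₗ[ℂ] H)).topologicalClosure ∧
      ContinuousLinearMap.adjoint T x ∈
        (LinearMap.range ((1 - ContinuousLinearMap.adjoint T ∘L T : H →L[ℂ] H) :
          H →ₗ[ℂ] H)).topologicalClosure := by
  set T' := ContinuousLinearMap.adjoint T with hT'
  set A : H →L[ℂ] H := 1 - T' ∘L T with hA
  have hq' : T' ∘L (T' ∘L T) = (T' ∘L T) ∘L T' := by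
    have := congrArg ContinuousLinearMap.adjoint hq
    simpa [adjoint_comp, hT', adjoint_adjoint, ← comp_assoc] using this.symm
  have hTA : ∀ y, T (A y) = A (T y) := by
    intro y
    have := congrFun (congrArg DFunLike.coe hq) y
    simp only [comp_apply] at this
    simp [hA, map_sub, this]
  have hT'A : ∀ y, T' (A y) = A (T' y) := by
    intro y
    have := congrFun (congrArg DFunLike.coe hq') y
    simp only [comp_apply] at this
    simp [hA, map_sub, this]
  set M := LinearMap.range ((A : H →L[ℂ] H) : H →ₗ[ℂ] H) with hM
  have key : ∀ (S : H →L[ℂ] H), (∀ y, S (A y) = A (S y)) →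
      ∀ x ∈ M.topologicalClosure, S x ∈ M.topologicalClosure := by
    intro S hS x hx
    have hmt : Set.MapsTo S (M : Set H) (M : Set H) := by
      rintro _ ⟨y, rfl⟩
      exact ⟨S y, (hS y).symm⟩
    exact hmt.closure S.continuous hx
  intro x hx
  exact ⟨key T hTA x hx, key T' hT'A x hx⟩
end

section
/- Let T = S_k + u ⊗ v on a Hilbert space H, where S_k is a unilateral shift of multiplicity k and u, v are nonzero vectors. If v and S_k* u are linearly independent, then the range of I - T*T equals the linear span of {v, S_k* u}. -/
open ContinuousLinearMap

noncomputable def rankOne {H : Type*} [NormedAddCommGroup H] [InnerProductSpace ℂ H]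
    [CompleteSpace H] (u v : H) : H →L[ℂ] H :=
  (innerSL ℂ v).smulRight u

section Aux

local notation "⟪" x ", " y "⟫" => @inner ℂ _ _ x y

variable {H : Type*} [NormedAddCommGroup H] [InnerProductSpace ℂ H] [CompleteSpace H]

lemma rankOne_apply (u v x : H) : rankOne u v x = ⟪v, x⟫ • u := rfl

lemma exists_inner_eq (v w : H) (h : LinearIndependent ℂ ![v, w]) (α β : ℂ) :
    ∃ x : H, ⟪v, x⟫ = α ∧ ⟪w, x⟫ = β := by
  set K := Submodule.span ℂ {v, w} with hK
  have hvw : Set.range ![v, w] = {v, w} := by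
    ext x
    simp only [Set.mem_range, Fin.exists_fin_two, Matrix.cons_val_zero, Matrix.cons_val_one,
      Matrix.head_cons, Set.mem_insert_iff, Set.mem_singleton_iff]
    tauto
  have hfd : FiniteDimensional ℂ K := by
    apply FiniteDimensional.span_of_finite
    exact (Set.finite_singleton w).insert v
  have hrank : Module.finrank ℂ K = 2 := by
    have h2 := finrank_span_eq_card h
    rw [hvw] at h2
    simpa [hK] using h2
  let ψ : K →ₗ[ℂ] ℂ × ℂ :=
    { toFun := fun x => (⟪v, (x : H)⟫, ⟪w, (x : H)⟫)
      map_add' := by intro x y; simp [inner_add_right]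
      map_smul' := by intro c x; simp [inner_smul_right] }
  have hinj : Function.Injective ψ := by
    rw [← LinearMap.ker_eq_bot, LinearMap.ker_eq_bot']
    intro m hm
    have hv0 : ⟪v, (m : H)⟫ = 0 := congrArg Prod.fst hm
    have hw0 : ⟪w, (m : H)⟫ = 0 := congrArg Prod.snd hm
    have hmK : (m : H) ∈ Submodule.span ℂ {v, w} := m.2
    rw [Submodule.mem_span_pair] at hmK
    obtain ⟨a, b, hab⟩ := hmK
    have hzero : ⟪(m : H), (m : H)⟫ = 0 := by
      calc ⟪(m : H), (m : H)⟫ = ⟪a • v + b • w, (m : H)⟫ := by rw [hab]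
        _ = (starRingEnd ℂ) a * ⟪v, (m : H)⟫ + (starRingEnd ℂ) b * ⟪w, (m : H)⟫ := by
            rw [inner_add_left, inner_smul_left, inner_smul_left]
        _ = 0 := by rw [hv0, hw0]; ring
    exact Subtype.ext (inner_self_eq_zero.mp hzero)
  have hsurj : Function.Surjective ψ := by
    have heq : Module.finrank ℂ K = Module.finrank ℂ (ℂ × ℂ) := by
      simp [hrank]
    exact (LinearMap.injective_iff_surjective_of_finrank_eq_finrank heq).mp hinj
  obtain ⟨x, hx⟩ := hsurj (α, β)
  exact ⟨x, congrArg Prod.fst hx, congrArg Prod.snd hx⟩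

end Aux

/-- If `T = S_k + u ⊗ v` with `v` and `S_k* u` linearly independent, then
`ran (I - T*T) = span {v, S_k* u}`. -/
theorem stmt_9 {H : Type*} [NormedAddCommGroup H] [InnerProductSpace ℂ H]
    [CompleteSpace H]
    (e : HilbertBasis ℕ ℂ H) (k : ℕ) (hk : 1 ≤ k)
    (S : H →L[ℂ] H) (hS : ∀ n, S (e n) = e (n + k))
    (u v : H) (hu : u ≠ 0) (hv : v ≠ 0)
    (hind : LinearIndependent ℂ ![v, ContinuousLinearMap.adjoint S u])
    (T : H →L[ℂ] H) (hT : T = S + rankOne u v) :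
    LinearMap.range (((1 : H →L[ℂ] H) - ContinuousLinearMap.adjoint T ∘L T) : H →ₗ[ℂ] H) =
      Submodule.span ℂ {v, ContinuousLinearMap.adjoint S u} := by
  set w : H := ContinuousLinearMap.adjoint S u with hw
  set c : ℂ := @inner ℂ _ _ u u with hc
  -- S is an isometry: S* S = 1
  have hSS : ContinuousLinearMap.adjoint S ∘L S = 1 := by
    have hd : Dense (Submodule.span ℂ (Set.range e) : Set H) :=
      Submodule.dense_iff_topologicalClosure_eq_top.mpr e.dense_span
    refine ContinuousLinearMap.ext_on hd ?_
    rintro x ⟨n, rfl⟩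
    apply e.repr.injective
    ext m
    rw [e.repr_apply_apply, e.repr_apply_apply]
    have horth := e.orthonormal
    rw [orthonormal_iff_ite] at horth
    simp only [ContinuousLinearMap.comp_apply, ContinuousLinearMap.one_apply]
    rw [ContinuousLinearMap.adjoint_inner_right, hS, hS, horth, horth]
    simp
  -- adjoint of rankOne
  have hadj : ContinuousLinearMap.adjoint (rankOne u v) = rankOne v u := by
    symm
    rw [ContinuousLinearMap.eq_adjoint_iff]
    intro x y
    rw [rankOne_apply, rankOne_apply, inner_smul_left, inner_smul_right]
    rw [inner_conj_symm]
    ring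
  -- key formula
  have key : ∀ x : H,
      (((1 : H →L[ℂ] H) - ContinuousLinearMap.adjoint T ∘L T) : H →ₗ[ℂ] H) x =
        (-(@inner ℂ _ _ v x)) • w +
          (-((@inner ℂ _ _ w x) + c * (@inner ℂ _ _ v x))) • v := by
    intro x
    have hTx : T x = S x + (@inner ℂ _ _ v x) • u := by
      rw [hT]; rfl
    have hadjT : ContinuousLinearMap.adjoint T =
        ContinuousLinearMap.adjoint S + rankOne v u := by
      rw [hT, map_add, hadj]
    have hSSx : ContinuousLinearMap.adjoint S (S x) = x := by
      have := congrArg (fun A => A x) hSS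
      simpa using this
    have hwx : @inner ℂ _ _ u (S x) = @inner ℂ _ _ w x := by
      rw [hw, ContinuousLinearMap.adjoint_inner_left]
    show x - ContinuousLinearMap.adjoint T (T x) = _
    rw [hTx, hadjT]
    simp only [ContinuousLinearMap.add_apply, map_add, map_smul, rankOne_apply,
      hSSx, inner_smul_right, hwx]
    rw [← hc, ← hw]
    module
  apply le_antisymm
  · rintro y ⟨x, rfl⟩
    rw [key]
    apply Submodule.add_mem
    · exact Submodule.smul_mem _ _ (Submodule.subset_span (by simp))
    · exact Submodule.smul_mem _ _ (Submodule.subset_span (by simp))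
  · have hv_mem : v ∈ LinearMap.range
        (((1 : H →L[ℂ] H) - ContinuousLinearMap.adjoint T ∘L T) : H →ₗ[ℂ] H) := by
      obtain ⟨x, hx1, hx2⟩ := exists_inner_eq v w hind 0 (-1)
      refine ⟨x, ?_⟩
      rw [key, hx1, hx2]
      module
    have hw_mem : w ∈ LinearMap.range
        (((1 : H →L[ℂ] H) - ContinuousLinearMap.adjoint T ∘L T) : H →ₗ[ℂ] H) := by
      obtain ⟨x, hx1, hx2⟩ := exists_inner_eq v w hind (-1) c
      refine ⟨x, ?_⟩
      rw [key, hx1, hx2]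
      module
    rw [Submodule.span_le]
    intro y hy
    rcases hy with rfl | rfl
    · exact hv_mem
    · exact hw_mem
end

section
/- Let T = S + u ⊗ v on a Hilbert space with S a unilateral shift of multiplicity one and u, v nonzero. If T is quasinormal and not an isometry, then the orthogonal complement of ker(I - T*T) has dimension 1 or 2. -/
open ContinuousLinearMap
open scoped ComplexInnerProductSpace

/-- The adjoint of a unilateral shift maps `e (n+1)` to `e n`. -/
lemma shift_adjoint_apply {H : Type*} [NormedAddCommGroup H] [InnerProductSpace ℂ H]
    [CompleteSpace H] (e : HilbertBasis ℕ ℂ H)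
    (S : H →L[ℂ] H) (hS : ∀ n, S (e n) = e (n + 1)) (n : ℕ) :
    ContinuousLinearMap.adjoint S (e (n + 1)) = e n := by
  have h : innerSL ℂ (ContinuousLinearMap.adjoint S (e (n + 1))) = innerSL ℂ (e n) := by
    refine ContinuousLinearMap.ext_on (Submodule.dense_iff_topologicalClosure_eq_top.mpr e.dense_span) ?_
    rintro _ ⟨m, rfl⟩
    simp only [innerSL_apply_apply, ContinuousLinearMap.adjoint_inner_left, hS m]
    have ho := e.orthonormal
    rw [orthonormal_iff_ite] at ho
    rw [ho, ho]
    simp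
  exact ext_inner_right ℂ fun z => by simpa using DFunLike.congr_fun h z

/-- The shift is an isometry: `S* S = 1`. -/
lemma shift_isometry {H : Type*} [NormedAddCommGroup H] [InnerProductSpace ℂ H]
    [CompleteSpace H] (e : HilbertBasis ℕ ℂ H)
    (S : H →L[ℂ] H) (hS : ∀ n, S (e n) = e (n + 1)) :
    ContinuousLinearMap.adjoint S ∘L S = 1 := by
  refine ContinuousLinearMap.ext_on (Submodule.dense_iff_topologicalClosure_eq_top.mpr e.dense_span) ?_
  rintro _ ⟨n, rfl⟩
  simp [hS n, shift_adjoint_apply e S hS n]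

/-- If `T = S + u ⊗ v` (shift of multiplicity one) is quasinormal and not an isometry,
then the orthogonal complement of `ker(I - T*T)` has dimension 1 or 2. -/
theorem stmt_12 {H : Type*} [NormedAddCommGroup H] [InnerProductSpace ℂ H]
    [CompleteSpace H]
    (e : HilbertBasis ℕ ℂ H)
    (S : H →L[ℂ] H) (hS : ∀ n, S (e n) = e (n + 1))
    (u v : H) (hu : u ≠ 0) (hv : v ≠ 0)
    (T : H →L[ℂ] H) (hT : T = S + rankOne u v)
    (hq : T ∘L (ContinuousLinearMap.adjoint T ∘L T) = (ContinuousLinearMap.adjoint T ∘L T) ∘L T)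
    (hni : ContinuousLinearMap.adjoint T ∘L T ≠ 1) :
    Module.finrank ℂ
        ((LinearMap.ker (((1 : H →L[ℂ] H) - ContinuousLinearMap.adjoint T ∘L T) :
          H →ₗ[ℂ] H))ᗮ : Submodule ℂ H) = 1 ∨
      Module.finrank ℂ
        ((LinearMap.ker (((1 : H →L[ℂ] H) - ContinuousLinearMap.adjoint T ∘L T) :
          H →ₗ[ℂ] H))ᗮ : Submodule ℂ H) = 2 := by
  set D : H →L[ℂ] H := (1 : H →L[ℂ] H) - ContinuousLinearMap.adjoint T ∘L T with hD
  set N : Submodule ℂ H := LinearMap.ker (((1 : H →L[ℂ] H) - ContinuousLinearMap.adjoint T ∘L T) :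
    H →ₗ[ℂ] H) with hN
  have hND : N = LinearMap.ker (D : H →ₗ[ℂ] H) := by
    rw [hN, hD]; congr 1
  set w : H := ContinuousLinearMap.adjoint S u with hw
  set K : Submodule ℂ H := Submodule.span ℂ ({v, w} : Set H) with hK
  have hSS := shift_isometry e S hS
  -- Key: Kᗮ ≤ ker D
  have hkey : Kᗮ ≤ N := by
    intro x hx
    have hxv : ⟪v, x⟫ = 0 := hx v (Submodule.subset_span (by simp))
    have hxw : ⟪w, x⟫ = 0 := hx w (Submodule.subset_span (by simp))
    have hTx : T x = S x := by
      simp [hT, rankOne, hxv]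
    have hadj : ContinuousLinearMap.adjoint (rankOne u v) (S x) = 0 := by
      refine ext_inner_left ℂ fun z => ?_
      rw [ContinuousLinearMap.adjoint_inner_right]
      simp only [rankOne, ContinuousLinearMap.smulRight_apply, innerSL_apply_apply, inner_zero_right,
        inner_smul_left]
      have h0 : ⟪u, S x⟫ = 0 := by
        rw [← ContinuousLinearMap.adjoint_inner_left S x u]; exact hxw
      rw [h0, mul_zero]
    have : ContinuousLinearMap.adjoint T (T x) = x := by
      rw [hTx, hT, map_add]
      have h1 : ContinuousLinearMap.adjoint S (S x) = x := by
        simpa using DFunLike.congr_fun hSS x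
      simp only [map_add, ContinuousLinearMap.add_apply, h1, hadj, add_zero]
    rw [hND]
    simp only [LinearMap.mem_ker, ContinuousLinearMap.coe_coe, hD,
      ContinuousLinearMap.sub_apply, ContinuousLinearMap.one_apply,
      ContinuousLinearMap.comp_apply, this, sub_self]
  -- K is finite dimensional, so closed, so Kᗮᗮ = K
  have hKfd : FiniteDimensional ℂ K := by
    apply FiniteDimensional.span_of_finite
    exact (Set.finite_singleton w).insert v
  have hKK : Kᗮᗮ = K := Submodule.orthogonal_orthogonal K
  have hle : Nᗮ ≤ K := by
    calc Nᗮ ≤ Kᗮᗮ := Submodule.orthogonal_le hkey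
    _ = K := hKK
  have hNfd : FiniteDimensional ℂ (Nᗮ : Submodule ℂ H) :=
    Submodule.finiteDimensional_of_le hle
  -- upper bound
  have hK2 : Module.finrank ℂ K ≤ 2 := by
    classical
    have h1 : Module.finrank ℂ K ≤ ({v, w} : Set H).toFinset.card :=
      finrank_span_le_card _
    refine h1.trans ?_
    rw [Set.toFinset_insert, Set.toFinset_singleton]
    exact (Finset.card_insert_le _ _).trans (by simp)
  have hub : Module.finrank ℂ (Nᗮ : Submodule ℂ H) ≤ 2 :=
    le_trans (Submodule.finrank_mono hle) hK2
  -- lower bound : Nᗮ ≠ ⊥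
  have hne : Nᗮ ≠ ⊥ := by
    intro hbot
    have hNclosed : IsClosed (N : Set H) := by
      rw [hND]
      exact ContinuousLinearMap.isClosed_ker D
    have : CompleteSpace N := hNclosed.completeSpace_coe
    have hNtop : N = ⊤ := by
      have := Submodule.orthogonal_orthogonal N
      rw [hbot, Submodule.bot_orthogonal_eq_top] at this
      exact this.symm
    have hD0 : D = 0 := by
      ext x
      have : x ∈ N := hNtop ▸ Submodule.mem_top
      rw [hND] at this
      simpa [LinearMap.mem_ker] using this
    apply hni
    have : (1 : H →L[ℂ] H) - ContinuousLinearMap.adjoint T ∘L T = 0 := hD0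
    linear_combination (norm := abel) -this
  have hpos : 0 < Module.finrank ℂ (Nᗮ : Submodule ℂ H) := by
    rcases Submodule.ne_bot_iff _ |>.mp hne with ⟨x, hxmem, hx0⟩
    exact Module.finrank_pos_iff_exists_ne_zero.mpr ⟨⟨x, hxmem⟩, by simpa using hx0⟩
  omega
end

section
/- Let ‖u‖ = 1 and suppose T = S_k + u ⊗ v is an isometry with v nonzero. Then v = (α - 1) S_k* u for some unimodular scalar α ≠ 1, and in particular v and S_k*u are linearly dependent. -/
open ContinuousLinearMap

lemma adjoint_rankOne {H : Type*} [NormedAddCommGroup H] [InnerProductSpace ℂ H]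
    [CompleteSpace H] (u v : H) :
    ContinuousLinearMap.adjoint (rankOne u v) = rankOne v u := by
  symm
  rw [ContinuousLinearMap.eq_adjoint_iff]
  intro x y
  simp only [rankOne, ContinuousLinearMap.smulRight_apply, innerSL_apply_apply]
  rw [inner_smul_left, inner_smul_right, inner_conj_symm]
  ring

/-- If `‖u‖ = 1` and `T = S_k + u ⊗ v` is an isometry with `v ≠ 0`, then
`v = (α - 1) S_k* u` for some unimodular `α ≠ 1`; in particular `v` and `S_k*u`
are linearly dependent. -/
theorem stmt_15 {H : Type*} [NormedAddCommGroup H] [InnerProductSpace ℂ H]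
    [CompleteSpace H]
    (e : HilbertBasis ℕ ℂ H) (k : ℕ) (hk : 1 ≤ k)
    (S : H →L[ℂ] H) (hS : ∀ n, S (e n) = e (n + k))
    (u v : H) (hu : ‖u‖ = 1) (hv : v ≠ 0)
    (T : H →L[ℂ] H) (hT : T = S + rankOne u v)
    (hiso : ContinuousLinearMap.adjoint T ∘L T = 1) :
    ∃ α : ℂ, ‖α‖ = 1 ∧ α ≠ 1 ∧ v = (α - 1) • ContinuousLinearMap.adjoint S u := by
  classical
  have hdense : Dense ((Submodule.span ℂ (Set.range e) : Submodule ℂ H) : Set H) :=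
    Submodule.dense_iff_topologicalClosure_eq_top.mpr e.dense_span
  -- extensionality against the basis
  have hext : ∀ x y : H, (∀ n, (inner ℂ x (e n) : ℂ) = inner ℂ y (e n)) → x = y := by
    intro x y h
    have : innerSL ℂ x = innerSL ℂ y := by
      apply ContinuousLinearMap.ext_on hdense
      rintro _ ⟨n, rfl⟩
      simpa using h n
    exact ext_inner_right ℂ fun z => by simpa using congrArg (fun f => f z) this
  have horth := orthonormal_iff_ite.mp e.orthonormal
  -- S is an isometry
  have hSS : ContinuousLinearMap.adjoint S ∘L S = 1 := by
    apply ContinuousLinearMap.ext_on hdense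
    rintro _ ⟨n, rfl⟩
    show (ContinuousLinearMap.adjoint S) (S (e n)) = e n
    apply hext
    intro m
    rw [ContinuousLinearMap.adjoint_inner_left, hS, hS, horth, horth]
    simp
  set w := ContinuousLinearMap.adjoint S u with hw
  have huu : (inner ℂ u u : ℂ) = 1 := by
    rw [inner_self_eq_norm_sq_to_K, hu]; norm_num
  -- the key pointwise identity
  have key : ∀ f : H, (inner ℂ v f : ℂ) • (w + v) + (inner ℂ w f : ℂ) • v = 0 := by
    intro f
    have h1 : ContinuousLinearMap.adjoint T (T f) = f := by
      have := congrArg (fun A : H →L[ℂ] H => A f) hiso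
      simpa using this
    rw [hT, map_add, adjoint_rankOne] at h1
    have hTf : (S + rankOne u v) f = S f + (inner ℂ v f : ℂ) • u := by
      simp [rankOne]
    rw [hTf] at h1
    have h2 : (ContinuousLinearMap.adjoint S) (S f) = f := by
      have := congrArg (fun A : H →L[ℂ] H => A f) hSS
      simpa using this
    simp only [ContinuousLinearMap.add_apply, map_add, map_smul, h2] at h1
    have h3 : rankOne v u (S f) = (inner ℂ w f : ℂ) • v := by
      simp [rankOne, hw, ContinuousLinearMap.adjoint_inner_left]
    have h4 : rankOne v u u = v := by simp [rankOne, huu, hu]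
    rw [h3, h4, ← hw] at h1
    -- h1 : f + ⟪v,f⟫ • w + (⟪w,f⟫ • v + ⟪v,f⟫ • v) = f    (up to shape)
    have h5 : (inner ℂ v f : ℂ) • (w + v) + (inner ℂ w f : ℂ) • v
        = (f + (inner ℂ w f : ℂ) • v + (inner ℂ v f : ℂ) • (w + v)) - f := by
      module
    rw [h5, h1, sub_self]
  have hvv : (inner ℂ v v : ℂ) ≠ 0 := inner_self_ne_zero.mpr hv
  -- w is a multiple of v
  set β : ℂ := (inner ℂ v v : ℂ)⁻¹ * (-(inner ℂ w v) - inner ℂ v v) with hβ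
  have hwv : w = β • v := by
    have h := key v
    have h' : (inner ℂ v v : ℂ) • w - (-(inner ℂ w v : ℂ) - inner ℂ v v) • v
        = (inner ℂ v v : ℂ) • (w + v) + (inner ℂ w v : ℂ) • v := by module
    rw [h] at h'
    have h'' : (inner ℂ v v : ℂ) • w = (-(inner ℂ w v : ℂ) - inner ℂ v v) • v := sub_eq_zero.mp h'
    rw [hβ, mul_smul, ← h'', smul_smul, inv_mul_cancel₀ hvv, one_smul]
  -- β + conj β + 1 = 0
  have hsum : β + (starRingEnd ℂ) β + 1 = 0 := by
    have h := key v
    rw [hwv, inner_smul_left] at h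
    have h' : ((inner ℂ v v : ℂ) * (β + (starRingEnd ℂ) β + 1)) • v
        = (inner ℂ v v : ℂ) • (β • v + v) + ((starRingEnd ℂ) β * (inner ℂ v v : ℂ)) • v := by
      module
    rw [h] at h'
    rcases smul_eq_zero.mp h' with hc | hc
    · rcases mul_eq_zero.mp hc with hc | hc
      · exact absurd hc hvv
      · exact hc
    · exact absurd hc hv
  have hβ0 : β ≠ 0 := by
    intro h0
    rw [h0] at hsum
    simp at hsum
  have hβc0 : (starRingEnd ℂ) β ≠ 0 := by simpa using hβ0
  refine ⟨1 + β⁻¹, ?_, ?_, ?_⟩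
  · have hconj : (starRingEnd ℂ) β = -1 - β := by linear_combination hsum
    have hmul : (1 + β⁻¹) * (starRingEnd ℂ) (1 + β⁻¹) = 1 := by
      rw [map_add, map_one, map_inv₀, hconj]
      have hne : (-1 - β : ℂ) ≠ 0 := by rw [← hconj]; exact hβc0
      field_simp
      ring
    have h2 : ‖(1 + β⁻¹)‖ ^ 2 = 1 := by
      rw [Complex.sq_norm]
      have h3 := Complex.mul_conj (1 + β⁻¹)
      rw [hmul] at h3
      exact_mod_cast h3.symm
    nlinarith [norm_nonneg (1 + β⁻¹)]
  · intro h
    have : β⁻¹ = 0 := by linear_combination h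
    exact inv_ne_zero hβ0 this
  · rw [hwv, add_sub_cancel_left, smul_smul, inv_mul_cancel₀ hβ0, one_smul]
end
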